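/- Let I₁ > I₂ > I₃ > 0 and let (h,c) satisfy hI₃ < c < hI₂ (so that 0 < k² < 1 where k² = (hI₃ - c)(I₁ - I₂) / ((hI₁ - c)(I₃ - I₂))). Then the curve γ(t) = (a·cn(ωt; k), b·sn(ωt; k), -d·dn(ωt; k)) with a = √(2I₁(c - hI₃)/(I₁ - I₃)), b = √(2I₂(c - hI₃)/(I₂ - I₃)), d = √(2I₃(hI₁ - c)/(I₁ - I₃)), ω = √(2(I₂ - I₃)(hI₁ - c)/(I₁I₂I₃)), satisfies F₁(γ(t)) = h and F₂(γ(t)) = c for all t, where F₁(x,y,z) = (1/2)(x²/I₁ + y²/I₂ + z²/I₃) and F₂(x,y,z) = (1/2)(x² + y² + z²). -/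

import Mathlib

open Real

/-!
Along the curve, `cn² = 1 - sn²` and `dn² = 1 - k² sn²`, so both `F₁ ∘ γ` and `F₂ ∘ γ` are affine
functions of `sn²`. The amplitudes `a², b², d²` are chosen so that the constant terms are `h` and `c`,
and the value of `k²` is exactly the one that makes both coefficients of `sn²` vanish.
-/

section LevelSets

variable {I₁ I₂ I₃ h c k s x y z : ℝ}

lemma mul_modulus_sq_eq (h23 : I₂ - I₃ ≠ 0) (hc : h * I₁ - c ≠ 0)
    (hk : k ^ 2 = (h * I₃ - c) * (I₁ - I₂) / ((h * I₁ - c) * (I₃ - I₂))) :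
    (h * I₁ - c) * k ^ 2 = (c - h * I₃) * (I₁ - I₂) / (I₂ - I₃) := by
  have h32 : I₃ - I₂ ≠ 0 := fun h0 => h23 (by linarith)
  rw [hk]
  field_simp
  ring

variable (hx : x ^ 2 = 2 * I₁ * (c - h * I₃) / (I₁ - I₃) * (1 - s ^ 2))
  (hy : y ^ 2 = 2 * I₂ * (c - h * I₃) / (I₂ - I₃) * s ^ 2)
  (hz : z ^ 2 = 2 * I₃ / (I₁ - I₃) *
    ((h * I₁ - c) - (c - h * I₃) * (I₁ - I₂) / (I₂ - I₃) * s ^ 2))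
  (h13 : I₁ - I₃ ≠ 0) (h23 : I₂ - I₃ ≠ 0)
include hx hy hz h13 h23

lemma energy_eq_of_sq_eq (hI₁ : I₁ ≠ 0) (hI₂ : I₂ ≠ 0) (hI₃ : I₃ ≠ 0) :
    (1 / 2) * (x ^ 2 / I₁ + y ^ 2 / I₂ + z ^ 2 / I₃) = h := by
  rw [hx, hy, hz]
  field_simp
  ring

lemma casimir_eq_of_sq_eq : (1 / 2) * (x ^ 2 + y ^ 2 + z ^ 2) = c := by
  rw [hx, hy, hz]
  field_simp
  ring

end LevelSets

theorem rigid_body_orbit_lies_on_level_sets_general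
    (I₁ I₂ I₃ : ℝ) (h12 : I₂ < I₁) (h23 : I₃ < I₂) (h3 : 0 < I₃)
    (h c : ℝ) (hc1 : h * I₃ < c) (hc2 : c < h * I₂)
    (k : ℝ)
    (hk : k ^ 2 = (h * I₃ - c) * (I₁ - I₂) / ((h * I₁ - c) * (I₃ - I₂)))
    (sn cn dn : ℝ → ℝ)
    (hsncn : ∀ t, sn t ^ 2 + cn t ^ 2 = 1)
    (hdn : ∀ t, dn t ^ 2 + k ^ 2 * sn t ^ 2 = 1)
    (a b d ω : ℝ)
    (ha : a = Real.sqrt (2 * I₁ * (c - h * I₃) / (I₁ - I₃)))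
    (hb : b = Real.sqrt (2 * I₂ * (c - h * I₃) / (I₂ - I₃)))
    (hd : d = Real.sqrt (2 * I₃ * (h * I₁ - c) / (I₁ - I₃)))
    (γ : ℝ → ℝ × ℝ × ℝ)
    (hγ : ∀ t, γ t = (a * cn (ω * t), b * sn (ω * t), -(d * dn (ω * t))))
    (F₁ F₂ : ℝ × ℝ × ℝ → ℝ)
    (hF₁ : ∀ p : ℝ × ℝ × ℝ,
      F₁ p = (1 / 2) * (p.1 ^ 2 / I₁ + p.2.1 ^ 2 / I₂ + p.2.2 ^ 2 / I₃))
    (hF₂ : ∀ p : ℝ × ℝ × ℝ,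
      F₂ p = (1 / 2) * (p.1 ^ 2 + p.2.1 ^ 2 + p.2.2 ^ 2)) :
    ∀ t, F₁ (γ t) = h ∧ F₂ (γ t) = c := by
  have h2 : 0 < I₂ := h3.trans h23
  have h1 : 0 < I₁ := h2.trans h12
  have h13 : 0 < I₁ - I₃ := by linarith
  have h23' : 0 < I₂ - I₃ := by linarith
  have hc3 : 0 < h * I₁ - c := by nlinarith
  have hc4 : 0 < c - h * I₃ := by linarith
  have hkc := mul_modulus_sq_eq h23'.ne' hc3.ne' hk
  intro t
  set u := ω * t
  have hx : (a * cn u) ^ 2 = 2 * I₁ * (c - h * I₃) / (I₁ - I₃) * (1 - sn u ^ 2) := by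
    rw [mul_pow, ha, sq_sqrt (by positivity)]
    linear_combination 2 * I₁ * (c - h * I₃) / (I₁ - I₃) * hsncn u
  have hy : (b * sn u) ^ 2 = 2 * I₂ * (c - h * I₃) / (I₂ - I₃) * sn u ^ 2 := by
    rw [mul_pow, hb, sq_sqrt (by positivity)]
  have hz : (-(d * dn u)) ^ 2 = 2 * I₃ / (I₁ - I₃) *
      ((h * I₁ - c) - (c - h * I₃) * (I₁ - I₂) / (I₂ - I₃) * sn u ^ 2) := by
    rw [neg_sq, mul_pow, hd, sq_sqrt (by positivity), ← hkc]
    linear_combination 2 * I₃ * (h * I₁ - c) / (I₁ - I₃) * hdn u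
  rw [hγ, hF₁, hF₂]
  exact ⟨energy_eq_of_sq_eq hx hy hz h13.ne' h23'.ne' h1.ne' h2.ne' h3.ne',
    casimir_eq_of_sq_eq hx hy hz h13.ne' h23'.ne'⟩

theorem rigid_body_orbit_lies_on_level_sets
    (I₁ I₂ I₃ : ℝ) (h12 : I₂ < I₁) (h23 : I₃ < I₂) (h3 : 0 < I₃)
    (h c : ℝ) (hc1 : h * I₃ < c) (hc2 : c < h * I₂)
    (k : ℝ)
    (hk : k ^ 2 = (h * I₃ - c) * (I₁ - I₂) / ((h * I₁ - c) * (I₃ - I₂)))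
    (sn cn dn : ℝ → ℝ)
    (hsncn : ∀ t, sn t ^ 2 + cn t ^ 2 = 1)
    (hdn : ∀ t, dn t ^ 2 + k ^ 2 * sn t ^ 2 = 1)
    (a b d ω : ℝ)
    (ha : a = Real.sqrt (2 * I₁ * (c - h * I₃) / (I₁ - I₃)))
    (hb : b = Real.sqrt (2 * I₂ * (c - h * I₃) / (I₂ - I₃)))
    (hd : d = Real.sqrt (2 * I₃ * (h * I₁ - c) / (I₁ - I₃)))
    (hω : ω = Real.sqrt (2 * (I₂ - I₃) * (h * I₁ - c) / (I₁ * I₂ * I₃)))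
    (γ : ℝ → ℝ × ℝ × ℝ)
    (hγ : ∀ t, γ t = (a * cn (ω * t), b * sn (ω * t), -(d * dn (ω * t))))
    (F₁ F₂ : ℝ × ℝ × ℝ → ℝ)
    (hF₁ : ∀ p : ℝ × ℝ × ℝ,
      F₁ p = (1 / 2) * (p.1 ^ 2 / I₁ + p.2.1 ^ 2 / I₂ + p.2.2 ^ 2 / I₃))
    (hF₂ : ∀ p : ℝ × ℝ × ℝ,
      F₂ p = (1 / 2) * (p.1 ^ 2 + p.2.1 ^ 2 + p.2.2 ^ 2)) :
    ∀ t, F₁ (γ t) = h ∧ F₂ (γ t) = c :=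
  rigid_body_orbit_lies_on_level_sets_general I₁ I₂ I₃ h12 h23 h3 h c hc1 hc2 k hk sn cn dn hsncn
    hdn a b d ω ha hb hd γ hγ F₁ F₂ hF₁ hF₂
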